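/- Asynchronous coordinate-update contraction: let m : ℝᴺ → ℝᴺ satisfy ‖m(x) − m(y)‖_∞ ≤ γ‖x − y‖_∞ with γ < 1 (∞-norm contraction), and let the asynchronous iteration update an arbitrary nonempty subset S_t ⊆ {1,…,N} of coordinates at each step: x_{t+1,i} = m(x_t)_i for i ∈ S_t and x_{t+1,i} = x_{t,i} otherwise. If every coordinate is updated infinitely often, then x_t converges to the unique fixed point x⋆ of m. -/

import Mathlib

open Filter

/-!
Let `e t` be the sup-distance from the iterate to the fixed point `x⋆`. An updated coordinate
lands within `γ e t` of `x⋆`, and a coordinate that is left alone keeps its distance, so `e`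
is nonincreasing; moreover a coordinate updated at time `s` stays within `γ e s` of `x⋆`
forever after. Since every coordinate is updated after any time `T`, eventually
`e t ≤ γ e T`. Hence the limit `L` of the nonincreasing sequence `e` satisfies `L ≤ γ L`,
so `L = 0`.
-/

open scoped NNReal

lemma contractingWith_toNNReal_of_norm_sub_le {E : Type*} [NormedAddCommGroup E]
    {m : E → E} {γ : ℝ} (hγ : γ < 1) (hm : ∀ x y, ‖m x - m y‖ ≤ γ * ‖x - y‖) :
    ContractingWith γ.toNNReal m := by
  refine ⟨by simpa using hγ, LipschitzWith.of_dist_le_mul fun x y => ?_⟩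
  simp only [dist_eq_norm]
  exact (hm x y).trans (by gcongr; exact Real.le_coe_toNNReal γ)

namespace AsyncIteration

variable {ι : Type*} {π : ι → Type*} [Fintype ι] [∀ i, PseudoMetricSpace (π i)]
  {m : (∀ i, π i) → ∀ i, π i} {K : ℝ≥0} {xs : ∀ i, π i}
  {S : ℕ → Set ι} {x : ℕ → ∀ i, π i}

variable (hm : ∀ y, dist (m y) xs ≤ K * dist y xs)
  (hx : ∀ t i, i ∈ S t → x (t + 1) i = m (x t) i)
  (hx' : ∀ t i, i ∉ S t → x (t + 1) i = x t i)
include hm hx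

lemma dist_succ_le_of_mem {t : ℕ} {i : ι} (hi : i ∈ S t) :
    dist (x (t + 1) i) (xs i) ≤ K * dist (x t) xs := by
  rw [hx t i hi]
  exact (dist_le_pi_dist _ _ i).trans (hm _)

include hx'

lemma antitone_dist (hK : K ≤ 1) : Antitone fun t => dist (x t) xs := by
  refine antitone_nat_of_succ_le fun t => (dist_pi_le_iff dist_nonneg).2 fun i => ?_
  by_cases hi : i ∈ S t
  · calc dist (x (t + 1) i) (xs i) ≤ K * dist (x t) xs := dist_succ_le_of_mem hm hx hi
      _ ≤ dist (x t) xs := mul_le_of_le_one_left dist_nonneg (by exact_mod_cast hK)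
  · rw [hx' t i hi]
    exact dist_le_pi_dist _ _ i

lemma dist_le_of_mem_of_lt (hK : K ≤ 1) {s t : ℕ} {i : ι} (hi : i ∈ S s) (hst : s < t) :
    dist (x t i) (xs i) ≤ K * dist (x s) xs := by
  induction t, Nat.succ_le_of_lt hst using Nat.le_induction with
  | base => exact dist_succ_le_of_mem hm hx hi
  | succ t hst ih =>
    by_cases hit : i ∈ S t
    · exact (dist_succ_le_of_mem hm hx hit).trans
        (by gcongr; exact antitone_dist hm hx hx' hK (by omega))
    · rw [hx' t i hit]
      exact ih (by omega)

lemma eventually_dist_le_mul (hK : K ≤ 1) (hfair : ∀ i, ∀ T, ∃ t ≥ T, i ∈ S t) (T : ℕ) :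
    ∀ᶠ t in atTop, dist (x t) xs ≤ K * dist (x T) xs := by
  have hcoord : ∀ i, ∀ᶠ t in atTop, dist (x t i) (xs i) ≤ K * dist (x T) xs := fun i => by
    obtain ⟨s, hTs, hs⟩ := hfair i T
    filter_upwards [eventually_gt_atTop s] with t hst
    exact (dist_le_of_mem_of_lt hm hx hx' hK hs hst).trans
      (by gcongr; exact antitone_dist hm hx hx' hK hTs)
  filter_upwards [eventually_all.2 hcoord] with t ht
  exact (dist_pi_le_iff (by positivity)).2 ht

theorem tendsto (hK : K < 1) (hfair : ∀ i, ∀ T, ∃ t ≥ T, i ∈ S t) :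
    Tendsto x atTop (nhds xs) := by
  set e : ℕ → ℝ := fun t => dist (x t) xs
  have he_anti : Antitone e := antitone_dist hm hx hx' hK.le
  set L := ⨅ t, e t
  have he : Tendsto e atTop (nhds L) :=
    tendsto_atTop_ciInf he_anti ⟨0, by rintro _ ⟨t, rfl⟩; exact dist_nonneg⟩
  have hL_le : L ≤ K * L :=
    ge_of_tendsto' (he.const_mul (K : ℝ)) fun T =>
      le_of_tendsto he (eventually_dist_le_mul hm hx hx' hK.le hfair T)
  have hL : L = 0 := by
    have hL_nonneg : 0 ≤ L := le_ciInf fun t => dist_nonneg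
    have hK' : (K : ℝ) < 1 := hK
    nlinarith
  exact tendsto_iff_dist_tendsto_zero.2 (hL ▸ he)

end AsyncIteration

theorem stmt_19_general (N : ℕ) (m : (Fin N → ℝ) → (Fin N → ℝ))
    (γ : ℝ) (hγ : γ < 1)
    (hm : ∀ x y, ‖m x - m y‖ ≤ γ * ‖x - y‖)
    (S : ℕ → Set (Fin N))
    (x : ℕ → Fin N → ℝ)
    (hx : ∀ t i, i ∈ S t → x (t + 1) i = m (x t) i)
    (hx' : ∀ t i, i ∉ S t → x (t + 1) i = x t i)
    (hfair : ∀ i : Fin N, ∀ T : ℕ, ∃ t ≥ T, i ∈ S t) :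
    ∃ xs, m xs = xs ∧ (∀ y, m y = y → y = xs) ∧
      Tendsto x atTop (nhds xs) := by
  have hC := contractingWith_toNNReal_of_norm_sub_le hγ hm
  have hfix := hC.fixedPoint_isFixedPt
  refine ⟨_, hfix, fun y hy => hC.fixedPoint_unique hy, ?_⟩
  refine AsyncIteration.tendsto (fun y => ?_) hx hx' hC.1 hfair
  simpa only [hfix.eq] using hC.2.dist_le_mul y (ContractingWith.fixedPoint m hC)

/-- Asynchronous coordinate-update convergence: if `m` is a `γ`-contraction in the `∞`-norm
(`γ < 1`), and at each step an arbitrary nonempty subset of coordinates is updated, with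
every coordinate updated infinitely often, then the asynchronous iterates converge to the
unique fixed point of `m`. -/
theorem stmt_19 (N : ℕ) (m : (Fin N → ℝ) → (Fin N → ℝ))
    (γ : ℝ) (hγ : γ < 1)
    (hm : ∀ x y, ‖m x - m y‖ ≤ γ * ‖x - y‖)
    (S : ℕ → Set (Fin N)) (hSne : ∀ t, (S t).Nonempty)
    (x : ℕ → Fin N → ℝ)
    (hx : ∀ t i, i ∈ S t → x (t + 1) i = m (x t) i)
    (hx' : ∀ t i, i ∉ S t → x (t + 1) i = x t i)
    (hfair : ∀ i : Fin N, ∀ T : ℕ, ∃ t ≥ T, i ∈ S t) :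
    ∃ xs, m xs = xs ∧ (∀ y, m y = y → y = xs) ∧
      Tendsto x atTop (nhds xs) :=
  stmt_19_general N m γ hγ hm S x hx hx' hfair
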